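/- arXiv:0801.4022 — 3 statements merged into one kernel-verified Lean document; each statement's English description precedes it below -/
import Mathlib

section
/- Let k, ℓ ≥ 0 be integers and set N = k + ℓ + 1. Let x : ℝ^k → ℝ^N and y : ℝ^ℓ → ℝ^N be maps differentiable at points s ∈ ℝ^k and t ∈ ℝ^ℓ respectively, with x(s) ≠ y(t), and define f(s,t) = (x(s) − y(t))/‖x(s) − y(t)‖ ∈ ℝ^N. Then det(f(s,t), ∂f/∂s₁, …, ∂f/∂s_k, ∂f/∂t₁, …, ∂f/∂t_ℓ) = (−1)^ℓ · ‖x(s) − y(t)‖^{−N} · det(x(s) − y(t), ∂x/∂s₁, …, ∂x/∂s_k, ∂y/∂t₁, …, ∂y/∂t_ℓ), where all partial derivatives are evaluated at (s,t). -/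
/-!
With `r = x(s) - y(t)`, every partial derivative of `f = ‖r‖⁻¹ • r` is `‖r‖⁻¹` times the
corresponding partial derivative of `r` (which is `∂x/∂sᵢ` or `-∂y/∂tⱼ`) plus a multiple of `r`,
coming from the derivative of the factor `‖r‖⁻¹`. Row operations against the first row
`f = ‖r‖⁻¹ • r` remove these radial parts, and pulling the factors `‖r‖⁻¹` (`N` times) and `-1`
(`ℓ` times) out of the rows leaves `det(r, ∂x/∂s, ∂y/∂t)`.
-/

/-- The determinant of the square matrix whose rows are the given vectors. -/
noncomputable def rowDet {N : ℕ} (rows : Fin N → EuclideanSpace ℝ (Fin N)) : ℝ :=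
  Matrix.det (Matrix.of fun i j => rows i j)

section RowDet

variable {n : ℕ}

theorem rowDet_smul (w : Fin n → ℝ) (rows : Fin n → EuclideanSpace ℝ (Fin n)) :
    rowDet (fun i => w i • rows i) = (∏ i, w i) * rowDet rows := by
  simpa [rowDet] using Matrix.det_mul_column w (Matrix.of fun i j => rows i j)

theorem rowDet_cons_add_smul (u : EuclideanSpace ℝ (Fin (n + 1)))
    (v : Fin n → EuclideanSpace ℝ (Fin (n + 1))) (c : Fin n → ℝ) :
    rowDet (Fin.cons u fun i => v i + c i • u) = rowDet (Fin.cons u v) :=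
  Matrix.det_eq_of_forall_row_eq_smul_add_const (Fin.cons 0 c) 0 rfl fun i j => by
    refine Fin.cases ?_ (fun i => ?_) i <;> simp

theorem rowDet_cons_smul_add_smul (a : ℝ) (u : EuclideanSpace ℝ (Fin (n + 1)))
    (v : Fin n → EuclideanSpace ℝ (Fin (n + 1))) (b c : Fin n → ℝ) :
    rowDet (Fin.cons (a • u) fun i => b i • v i + c i • u)
      = a * (∏ i, b i) * rowDet (Fin.cons u v) := by
  rcases eq_or_ne a 0 with rfl | ha
  · simpa [rowDet] using Matrix.det_eq_zero_of_row_eq_zero (0 : Fin (n + 1)) fun j => by simp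
  have hc : (fun i => b i • v i + c i • u) = fun i => b i • v i + (c i / a) • (a • u) := by
    funext i; rw [smul_smul, div_mul_cancel₀ _ ha]
  rw [hc, rowDet_cons_add_smul, ← Fin.prod_cons, ← rowDet_smul]
  congr 1; funext i; refine Fin.cases ?_ (fun i => ?_) i <;> rfl

end RowDet

theorem exists_fderiv_norm_inv_smul_apply {E F : Type*} [NormedAddCommGroup E] [NormedSpace ℝ E]
    [NormedAddCommGroup F] [InnerProductSpace ℝ F] {g : E → F} {p : E}
    (hg : DifferentiableAt ℝ g p) (hp : g p ≠ 0) :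
    ∃ c : E →L[ℝ] ℝ, ∀ h, fderiv ℝ (fun q => ‖g q‖⁻¹ • g q) p h
      = ‖g p‖⁻¹ • fderiv ℝ g p h + c h • g p := by
  have hn : DifferentiableAt ℝ (fun q => ‖g q‖⁻¹) p := (hg.norm ℝ hp).inv (norm_ne_zero_iff.2 hp)
  exact ⟨fderiv ℝ (fun q => ‖g q‖⁻¹) p, fun h => by
    rw [(hn.hasFDerivAt.fun_smul hg.hasFDerivAt).fderiv]; rfl⟩

theorem HasFDerivAt.sub_fst_snd {E₁ E₂ F : Type*} [NormedAddCommGroup E₁] [NormedSpace ℝ E₁]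
    [NormedAddCommGroup E₂] [NormedSpace ℝ E₂] [NormedAddCommGroup F] [NormedSpace ℝ F]
    {x : E₁ → F} {y : E₂ → F} {x' : E₁ →L[ℝ] F} {y' : E₂ →L[ℝ] F} {s : E₁} {t : E₂}
    (hx : HasFDerivAt x x' s) (hy : HasFDerivAt y y' t) :
    HasFDerivAt (fun p : E₁ × E₂ => x p.1 - y p.2)
      (x'.comp (ContinuousLinearMap.fst ℝ E₁ E₂) - y'.comp (ContinuousLinearMap.snd ℝ E₁ E₂))
      (s, t) :=
  (hx.comp (s, t) hasFDerivAt_fst).sub (hy.comp (s, t) hasFDerivAt_snd)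

/-- With N = k + ℓ + 1, x : ℝ^k → ℝ^N and y : ℝ^ℓ → ℝ^N differentiable at s, t
with x(s) ≠ y(t), and f(s,t) = (x(s) − y(t))/‖x(s) − y(t)‖, one has
`det(f(s,t), ∂f/∂s₁, …, ∂f/∂s_k, ∂f/∂t₁, …, ∂f/∂t_ℓ)
  = (−1)^ℓ · ‖x(s) − y(t)‖^{−N} · det(x(s) − y(t), ∂x/∂s₁, …, ∂x/∂s_k, ∂y/∂t₁, …, ∂y/∂t_ℓ)`. -/
theorem gauss_pullback_identity (k l : ℕ)
    (x : EuclideanSpace ℝ (Fin k) → EuclideanSpace ℝ (Fin (k + l + 1)))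
    (y : EuclideanSpace ℝ (Fin l) → EuclideanSpace ℝ (Fin (k + l + 1)))
    (s : EuclideanSpace ℝ (Fin k)) (t : EuclideanSpace ℝ (Fin l))
    (hx : DifferentiableAt ℝ x s) (hy : DifferentiableAt ℝ y t)
    (hxy : x s ≠ y t)
    (f : EuclideanSpace ℝ (Fin k) × EuclideanSpace ℝ (Fin l) →
      EuclideanSpace ℝ (Fin (k + l + 1)))
    (hf : f = fun p => ‖x p.1 - y p.2‖⁻¹ • (x p.1 - y p.2)) :
    rowDet (Fin.cons (f (s, t))
        (Fin.append
          (fun i : Fin k => fderiv ℝ f (s, t) (EuclideanSpace.single i 1, 0))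
          (fun j : Fin l => fderiv ℝ f (s, t) (0, EuclideanSpace.single j 1))))
      = (-1) ^ l / ‖x s - y t‖ ^ (k + l + 1) *
        rowDet (Fin.cons (x s - y t)
          (Fin.append
            (fun i : Fin k => fderiv ℝ x s (EuclideanSpace.single i 1))
            (fun j : Fin l => fderiv ℝ y t (EuclideanSpace.single j 1)))) := by
  have hg := hx.hasFDerivAt.sub_fst_snd hy.hasFDerivAt
  obtain ⟨c, hc⟩ := exists_fderiv_norm_inv_smul_apply hg.differentiableAt (sub_ne_zero.2 hxy)
  set ρ := ‖x s - y t‖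
  have hrows : Fin.append
      (fun i : Fin k => fderiv ℝ f (s, t) (EuclideanSpace.single i 1, 0))
      (fun j : Fin l => fderiv ℝ f (s, t) (0, EuclideanSpace.single j 1))
      = fun i => Fin.append (fun _ => ρ⁻¹) (fun _ => -ρ⁻¹) i •
          Fin.append (fun i : Fin k => fderiv ℝ x s (EuclideanSpace.single i 1))
            (fun j : Fin l => fderiv ℝ y t (EuclideanSpace.single j 1)) i
        + c (Fin.append (fun i : Fin k => (EuclideanSpace.single i 1, 0))
            (fun j : Fin l => (0, EuclideanSpace.single j 1)) i) • (x s - y t) := by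
    subst hf
    funext i
    refine Fin.addCases (fun i => ?_) (fun j => ?_) i <;> simp [hc, hg.fderiv, ρ]
  have hf₀ : f (s, t) = ρ⁻¹ • (x s - y t) := by rw [hf]
  rw [hrows, hf₀, rowDet_cons_smul_add_smul, Fin.prod_univ_add]
  simp only [Fin.append_left, Fin.append_right, Finset.prod_const, Finset.card_univ,
    Fintype.card_fin]
  rw [neg_pow]; ring
end

section
/- Let k, ℓ ≥ 0 be integers and set n = k + ℓ + 1. Let x, y ∈ ℝ^{n+1} be linearly independent vectors, and let α = arccos(⟨x,y⟩/(‖x‖‖y‖)) ∈ (0, π) be the angle between x and y. Then the function τ ↦ τ^k / ‖τx − y‖^{n+1} is integrable on (0, ∞) and ∫₀^∞ τ^k / ‖τx − y‖^{n+1} dτ = Ω_{k,ℓ}(α) / (‖x‖^{k+1} ‖y‖^{ℓ+1} sin^n α). -/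
/-!
Substitute `τ = (‖y‖ / ‖x‖) sin (θ - α) / sin θ` for `θ ∈ (α, π)`: by the law of sines in the
triangle `0, τ x, y`, `θ` is the angle between `x` and `y - τ x`. This maps `(α, π)` increasingly
onto `(0, ∞)`, with `‖τ x - y‖ = ‖y‖ sin α / sin θ` and `dτ = (‖y‖ / ‖x‖) sin α / sin² θ dθ`, so the
integrand becomes `sin^k (θ - α) sin^ℓ θ / (‖x‖^(k+1) ‖y‖^(ℓ+1) sin^(k+ℓ+1) α)`.
-/

open Real Set MeasureTheory

open Real in
/-- For integers k, ℓ ≥ 0 and α ∈ ℝ, Ω_{k,ℓ}(α) = ∫_{θ=α}^{π} sin^k(θ − α) sin^ℓ(θ) dθ. -/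
noncomputable def Omega (k l : ℕ) (α : ℝ) : ℝ :=
  ∫ θ in α..π, Real.sin (θ - α) ^ k * Real.sin θ ^ l

theorem Real.exists_mem_Ioo_cos_eq_mul_sin (v : ℝ) : ∃ θ ∈ Ioo 0 π, cos θ = v * sin θ := by
  refine ⟨π / 2 - arctan v, ⟨?_, ?_⟩, ?_⟩
  · linarith [arctan_lt_pi_div_two v]
  · linarith [neg_pi_div_two_lt_arctan v, pi_pos]
  · rw [cos_pi_div_two_sub, sin_pi_div_two_sub, sin_arctan, cos_arctan]
    ring

noncomputable def raySubst (a b α θ : ℝ) : ℝ := b / a * (sin (θ - α) / sin θ)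

section RaySubst

variable {a b α θ : ℝ}

theorem hasDerivAt_raySubst (hθ : sin θ ≠ 0) :
    HasDerivAt (raySubst a b α) (b / a * (sin α / sin θ ^ 2)) θ := by
  have h := (((hasDerivAt_id θ).sub_const α).sin.div (hasDerivAt_sin θ) hθ).const_mul (b / a)
  refine h.congr_deriv ?_
  have := sin_sub θ (θ - α)
  rw [sub_sub_cancel] at this
  rw [this, id]
  ring

theorem hasDerivWithinAt_raySubst (hα : 0 < α) (hθ : θ ∈ Ioo α π) :
    HasDerivWithinAt (raySubst a b α) (b / a * (sin α / sin θ ^ 2)) (Ioo α π) θ :=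
  (hasDerivAt_raySubst (sin_pos_of_pos_of_lt_pi (hα.trans hθ.1) hθ.2).ne').hasDerivWithinAt

theorem strictMonoOn_raySubst (hα : α ∈ Ioo 0 π) (ha : 0 < a) (hb : 0 < b) :
    StrictMonoOn (raySubst a b α) (Ioo α π) := by
  refine strictMonoOn_of_hasDerivWithinAt_pos (f' := fun θ => b / a * (sin α / sin θ ^ 2))
    (convex_Ioo α π)
    (fun θ hθ => (hasDerivWithinAt_raySubst hα.1 hθ).continuousWithinAt) ?_ ?_ <;>
    rw [interior_Ioo]
  · exact fun θ => hasDerivWithinAt_raySubst hα.1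
  intro θ hθ
  have := sin_pos_of_pos_of_lt_pi (hα.1.trans hθ.1) hθ.2
  have := sin_pos_of_pos_of_lt_pi hα.1 hα.2
  positivity

theorem raySubst_image_Ioo (hα : α ∈ Ioo 0 π) (ha : 0 < a) (hb : 0 < b) :
    raySubst a b α '' Ioo α π = Ioi 0 := by
  have hsα := sin_pos_of_pos_of_lt_pi hα.1 hα.2
  ext t
  constructor
  · rintro ⟨θ, hθ, rfl⟩
    have := sin_pos_of_pos_of_lt_pi (hα.1.trans hθ.1) hθ.2
    have := sin_pos_of_pos_of_lt_pi (sub_pos.2 hθ.1) (by linarith [hθ.2, hα.1])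
    exact mul_pos (div_pos hb ha) (div_pos ‹_› ‹_›)
  · intro (ht : 0 < t)
    -- `raySubst a b α θ = t` says `cot θ = cot α - a t / (b sin α)`
    obtain ⟨θ, hθ, hcos⟩ := exists_mem_Ioo_cos_eq_mul_sin ((cos α - a * t / b) / sin α)
    have hsθ := sin_pos_of_pos_of_lt_pi hθ.1 hθ.2
    have hsub : sin (θ - α) = a * t / b * sin θ := by
      rw [sin_sub, hcos]
      field_simp
      ring
    refine ⟨θ, ⟨?_, hθ.2⟩, ?_⟩
    · by_contra! h
      have := sin_nonpos_of_nonpos_of_neg_pi_le (sub_nonpos.2 h) (by linarith [hθ.1, hα.2])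
      have : 0 < a * t / b * sin θ := by positivity
      linarith
    · rw [raySubst, hsub]
      field_simp

end RaySubst

namespace InnerProductGeometry

variable {V : Type*} [NormedAddCommGroup V] [InnerProductSpace ℝ V] {x y : V}

theorem angle_mem_Ioo_of_linearIndependent (h : LinearIndependent ℝ ![x, y]) :
    angle x y ∈ Ioo 0 π := by
  have not_parallel : ∀ r : ℝ, y ≠ r • x := fun r hr =>
    one_ne_zero (neg_eq_zero.1 (LinearIndependent.pair_iff.1 h r (-1) (by simp [← hr])).2)
  refine ⟨(angle_nonneg x y).lt_of_ne' fun h0 => ?_, (angle_le_pi x y).lt_of_ne fun hπ => ?_⟩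
  · obtain ⟨-, r, -, hr⟩ := angle_eq_zero_iff.1 h0
    exact not_parallel r hr
  · obtain ⟨-, r, -, hr⟩ := angle_eq_pi_iff.1 hπ
    exact not_parallel r hr

theorem norm_raySubst_smul_sub (hx : x ≠ 0) {θ : ℝ} (hθ : 0 < sin θ) :
    ‖raySubst ‖x‖ ‖y‖ (angle x y) θ • x - y‖ = ‖y‖ * sin (angle x y) / sin θ := by
  set α := angle x y
  have ha : 0 < ‖x‖ := norm_pos_iff.2 hx
  refine (pow_left_inj₀ (norm_nonneg _) (by have := sin_angle_nonneg x y; positivity)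
    two_ne_zero).1 ?_
  rw [norm_sub_sq_real, real_inner_smul_left, ← cos_angle_mul_norm_mul_norm, norm_smul,
    Real.norm_eq_abs, mul_pow, sq_abs, raySubst, sin_sub]
  field_simp
  linear_combination ‖y‖ ^ 2 * (sin α ^ 2 * sin_sq_add_cos_sq θ - sin θ ^ 2 * sin_sq_add_cos_sq α)

section RayIntegral

variable (k l : ℕ) (h : LinearIndependent ℝ ![x, y])
include h

theorem abs_deriv_raySubst_smul_eqOn :
    EqOn (fun θ => |‖y‖ / ‖x‖ * (sin (angle x y) / sin θ ^ 2)| •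
        (fun τ : ℝ => τ ^ k / ‖τ • x - y‖ ^ (k + l + 2)) (raySubst ‖x‖ ‖y‖ (angle x y) θ))
      (fun θ => sin (θ - angle x y) ^ k * sin θ ^ l /
        (‖x‖ ^ (k + 1) * ‖y‖ ^ (l + 1) * sin (angle x y) ^ (k + l + 1)))
      (Ioo (angle x y) π) := fun θ hθ => by
  have hα := angle_mem_Ioo_of_linearIndependent h
  have hx : x ≠ 0 := by simpa using h.ne_zero 0
  have ha : 0 < ‖x‖ := norm_pos_iff.2 hx
  have hb : 0 < ‖y‖ := norm_pos_iff.2 (by simpa using h.ne_zero 1)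
  have hsα := sin_pos_of_pos_of_lt_pi hα.1 hα.2
  have hsθ := sin_pos_of_pos_of_lt_pi (hα.1.trans hθ.1) hθ.2
  dsimp only
  rw [norm_raySubst_smul_sub hx hsθ, abs_of_pos (by positivity), raySubst, smul_eq_mul]
  simp only [div_pow, mul_pow]
  field_simp
  ring

theorem integrableOn_Ioi_pow_div_norm_smul_sub_pow :
    IntegrableOn (fun τ : ℝ => τ ^ k / ‖τ • x - y‖ ^ (k + l + 2)) (Ioi 0) := by
  have hα := angle_mem_Ioo_of_linearIndependent h
  have ha : 0 < ‖x‖ := norm_pos_iff.2 (by simpa using h.ne_zero 0)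
  have hb : 0 < ‖y‖ := norm_pos_iff.2 (by simpa using h.ne_zero 1)
  rw [← raySubst_image_Ioo hα ha hb,
    integrableOn_image_iff_integrableOn_abs_deriv_smul measurableSet_Ioo
      (fun θ => hasDerivWithinAt_raySubst hα.1) (strictMonoOn_raySubst hα ha hb).injOn]
  refine IntegrableOn.congr_fun ?_ (abs_deriv_raySubst_smul_eqOn k l h).symm measurableSet_Ioo
  exact (Continuous.integrableOn_Icc (by fun_prop)).mono_set Ioo_subset_Icc_self

theorem integral_Ioi_pow_div_norm_smul_sub_pow :
    ∫ τ in Ioi (0 : ℝ), τ ^ k / ‖τ • x - y‖ ^ (k + l + 2) =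
      Omega k l (angle x y) /
        (‖x‖ ^ (k + 1) * ‖y‖ ^ (l + 1) * sin (angle x y) ^ (k + l + 1)) := by
  have hα := angle_mem_Ioo_of_linearIndependent h
  have ha : 0 < ‖x‖ := norm_pos_iff.2 (by simpa using h.ne_zero 0)
  have hb : 0 < ‖y‖ := norm_pos_iff.2 (by simpa using h.ne_zero 1)
  rw [← raySubst_image_Ioo hα ha hb,
    integral_image_eq_integral_abs_deriv_smul measurableSet_Ioo
      (fun θ => hasDerivWithinAt_raySubst hα.1) (strictMonoOn_raySubst hα ha hb).injOn,
    setIntegral_congr_fun measurableSet_Ioo (abs_deriv_raySubst_smul_eqOn k l h), integral_div,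
    Omega, intervalIntegral.integral_of_le hα.2.le, integral_Ioc_eq_integral_Ioo]

end RayIntegral

end InnerProductGeometry

/-- For linearly independent x, y ∈ ℝ^{n+1} (n = k + ℓ + 1) with angle
α = arccos(⟨x,y⟩/(‖x‖‖y‖)), the function τ ↦ τ^k/‖τx − y‖^{n+1} is integrable on (0, ∞) and
`∫₀^∞ τ^k / ‖τx − y‖^{n+1} dτ = Ω_{k,ℓ}(α) / (‖x‖^{k+1} ‖y‖^{ℓ+1} sin^n α)`. -/
theorem cone_ray_integral (k l : ℕ) (x y : EuclideanSpace ℝ (Fin (k + l + 2)))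
    (hxy : LinearIndependent ℝ ![x, y]) :
    MeasureTheory.IntegrableOn
      (fun τ : ℝ => τ ^ k / ‖τ • x - y‖ ^ (k + l + 2)) (Set.Ioi 0) ∧
    ∫ τ in Set.Ioi (0:ℝ), τ ^ k / ‖τ • x - y‖ ^ (k + l + 2)
      = Omega k l (Real.arccos ((inner ℝ x y : ℝ) / (‖x‖ * ‖y‖))) /
        (‖x‖ ^ (k + 1) * ‖y‖ ^ (l + 1) *
          Real.sin (Real.arccos ((inner ℝ x y : ℝ) / (‖x‖ * ‖y‖))) ^ (k + l + 1)) :=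
  ⟨InnerProductGeometry.integrableOn_Ioi_pow_div_norm_smul_sub_pow k l hxy,
    InnerProductGeometry.integral_Ioi_pow_div_norm_smul_sub_pow k l hxy⟩
end

section
/- Let k, ℓ ≥ 0 be integers and set n = k + ℓ + 1. For every real b > 0 and every α ∈ (0, π), ∫_{−b·cos α}^{∞} (u + b·cos α)^k / (u² + b²·sin²α)^{(n+1)/2} du = Ω_{k,ℓ}(α) / (b^{ℓ+1} sin^n α). -/
/-!
The substitution `u = -b sin α cot θ` maps `(α, π)` increasingly onto `(-b cos α, ∞)`, with
`du = b sin α / sin² θ dθ`, `u + b cos α = b sin (θ - α) / sin θ` and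
`u² + b² sin² α = (b sin α / sin θ)²`; so the integrand becomes
`sin^k (θ - α) sin^ℓ θ / (b^(ℓ+1) sin^n α)`.
-/

open Real Set Filter Topology MeasureTheory

theorem StrictMonoOn.image_Ioo_eq_Ioi_of_tendsto {α β : Type*}
    [ConditionallyCompleteLinearOrder α] [TopologicalSpace α] [OrderTopology α] [DenselyOrdered α]
    [LinearOrder β] [TopologicalSpace β] [OrderClosedTopology β] [NoMaxOrder β]
    {f : α → β} {a b : α} (hab : a < b)
    (hmono : StrictMonoOn f (Ico a b)) (hf : ContinuousOn f (Ico a b))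
    (htend : Tendsto f (𝓝[<] b) atTop) : f '' Ioo a b = Ioi (f a) := by
  refine Subset.antisymm ?_ fun u hu => ?_
  · rintro _ ⟨x, hx, rfl⟩
    exact hmono (left_mem_Ico.2 hab) (Ioo_subset_Ico_self hx) hx.1
  · have := nhdsLT_neBot_of_exists_lt ⟨a, hab⟩
    obtain ⟨c, huc, hc⟩ :=
      ((htend.eventually_gt_atTop u).and (Ioo_mem_nhdsLT hab)).exists
    obtain ⟨x, hx, rfl⟩ :=
      intermediate_value_Ioo hc.1.le (hf.mono (Icc_subset_Ico_right hc.2)) ⟨hu, huc⟩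
    exact ⟨x, ⟨hx.1, hx.2.trans hc.2⟩, rfl⟩

namespace Real

theorem cot_eq_tan_pi_div_two_sub (x : ℝ) : cot x = tan (π / 2 - x) := by
  rw [tan_pi_div_two_sub, ← cot_inv_eq_tan, inv_inv]

theorem hasDerivAt_cot {x : ℝ} (hx : sin x ≠ 0) : HasDerivAt cot (-1 / sin x ^ 2) x := by
  have h := (hasDerivAt_cos x).div (hasDerivAt_sin x) hx
  rw [show cot = cos / sin from funext cot_eq_cos_div_sin]
  refine h.congr_deriv ?_
  rw [← sin_sq_add_cos_sq x]
  ring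

theorem strictAntiOn_cot : StrictAntiOn cot (Ioo 0 π) := by
  intro x hx y hy hxy
  rw [cot_eq_tan_pi_div_two_sub, cot_eq_tan_pi_div_two_sub]
  exact tan_lt_tan_of_lt_of_lt_pi_div_two (by linarith [hy.2]) (by linarith [hx.1]) (by linarith)

theorem tendsto_cot_nhdsLT_pi : Tendsto cot (𝓝[<] π) atBot := by
  rw [show cot = fun x => tan (π / 2 - x) from funext cot_eq_tan_pi_div_two_sub]
  refine tendsto_tan_neg_pi_div_two.comp
    (tendsto_nhdsWithin_of_tendsto_nhds_of_eventually_within _ ?_ ?_)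
  · exact ((continuous_sub_left _).tendsto' π _ (by ring)).mono_left nhdsWithin_le_nhds
  · filter_upwards [self_mem_nhdsWithin] with x (hx : x < π)
    show -(π / 2) < π / 2 - x
    linarith

end Real

theorem hasDerivAt_neg_mul_cot (s : ℝ) {x : ℝ} (hx : sin x ≠ 0) :
    HasDerivAt (fun θ => -(s * cot θ)) (s / sin x ^ 2) x :=
  ((hasDerivAt_cot hx).const_mul s).fun_neg.congr_deriv (by ring)

theorem strictMonoOn_neg_mul_cot {s : ℝ} (hs : 0 < s) :
    StrictMonoOn (fun θ => -(s * cot θ)) (Ioo 0 π) := fun _ hx _ hy hxy =>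
  neg_lt_neg (mul_lt_mul_of_pos_left (strictAntiOn_cot hx hy hxy) hs)

theorem image_neg_mul_cot_Ioo {s : ℝ} (hs : 0 < s) {a : ℝ} (ha : a ∈ Ioo 0 π) :
    (fun θ => -(s * cot θ)) '' Ioo a π = Ioi (-(s * cot a)) := by
  have hsub : Ico a π ⊆ Ioo 0 π := fun x hx => ⟨ha.1.trans_le hx.1, hx.2⟩
  refine StrictMonoOn.image_Ioo_eq_Ioi_of_tendsto ha.2 ((strictMonoOn_neg_mul_cot hs).mono hsub)
    ?_ ?_
  · exact fun x hx => (hasDerivAt_neg_mul_cot s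
      (sin_pos_of_mem_Ioo (hsub hx)).ne').continuousAt.continuousWithinAt
  · exact tendsto_neg_atBot_atTop.comp (tendsto_cot_nhdsLT_pi.const_mul_atBot hs)

theorem neg_mul_sin_mul_cot_add_mul_cos (b α : ℝ) {θ : ℝ} (hθ : sin θ ≠ 0) :
    -(b * sin α * cot θ) + b * cos α = b * sin (θ - α) / sin θ := by
  rw [cot_eq_cos_div_sin, sin_sub]
  field_simp
  ring

theorem neg_mul_cot_sq_add_sq (s : ℝ) {θ : ℝ} (hθ : sin θ ≠ 0) :
    (-(s * cot θ)) ^ 2 + s ^ 2 = (s / sin θ) ^ 2 := by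
  rw [cot_eq_cos_div_sin]
  field_simp
  linear_combination s ^ 2 * cos_sq_add_sin_sq θ

theorem sq_rpow_natCast_div_two {x : ℝ} (hx : 0 ≤ x) (n : ℕ) :
    (x ^ 2) ^ ((n : ℝ) / 2) = x ^ n := by
  rw [← rpow_natCast x 2, ← rpow_mul hx, ← rpow_natCast]
  congr 1
  push_cast
  ring

theorem abs_mul_integrand_neg_mul_cot (k l : ℕ) {b α θ : ℝ} (hb : 0 < b) (hα : 0 < sin α)
    (hθ : 0 < sin θ) :
    |b * sin α / sin θ ^ 2| * ((-(b * sin α * cot θ) + b * cos α) ^ k /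
        ((-(b * sin α * cot θ)) ^ 2 + b ^ 2 * sin α ^ 2) ^ (((k : ℝ) + l + 2) / 2))
      = sin (θ - α) ^ k * sin θ ^ l / (b ^ (l + 1) * sin α ^ (k + l + 1)) := by
  rw [neg_mul_sin_mul_cot_add_mul_cos b α hθ.ne', ← mul_pow, neg_mul_cot_sq_add_sq _ hθ.ne',
    show (k : ℝ) + l + 2 = (k + l + 2 : ℕ) by push_cast; ring,
    sq_rpow_natCast_div_two (by positivity), abs_of_pos (by positivity), div_pow, div_pow]
  field_simp
  ring

/-- Let k, ℓ ≥ 0 and n = k + ℓ + 1.  For every real b > 0 and α ∈ (0, π),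
`∫_{−b·cos α}^{∞} (u + b·cos α)^k / (u² + b²·sin²α)^{(n+1)/2} du = Ω_{k,ℓ}(α)/(b^{ℓ+1} sin^n α)`. -/
theorem key_integral_identity (k l : ℕ) (b : ℝ) (hb : 0 < b)
    (α : ℝ) (hα : α ∈ Set.Ioo 0 Real.pi) :
    ∫ u in Set.Ioi (-(b * Real.cos α)),
        (u + b * Real.cos α) ^ k / (u ^ 2 + b ^ 2 * Real.sin α ^ 2) ^ (((k : ℝ) + l + 2) / 2)
      = Omega k l α / (b ^ (l + 1) * Real.sin α ^ (k + l + 1)) := by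
  have hsinα : 0 < sin α := sin_pos_of_mem_Ioo hα
  have hsub : Ioo α π ⊆ Ioo 0 π := Ioo_subset_Ioo_left hα.1.le
  have hsin : ∀ θ ∈ Ioo α π, 0 < sin θ := fun θ hθ => sin_pos_of_mem_Ioo (hsub hθ)
  have hlower : -(b * sin α * cot α) = -(b * cos α) := by
    rw [cot_eq_cos_div_sin]
    field_simp
  rw [← hlower, ← image_neg_mul_cot_Ioo (mul_pos hb hsinα) hα,
    integral_image_eq_integral_abs_deriv_smul measurableSet_Ioo
      (fun θ hθ => (hasDerivAt_neg_mul_cot _ (hsin θ hθ).ne').hasDerivWithinAt)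
      ((strictMonoOn_neg_mul_cot (mul_pos hb hsinα)).injOn.mono hsub),
    setIntegral_congr_fun measurableSet_Ioo fun θ hθ =>
      (smul_eq_mul _ _).trans (abs_mul_integrand_neg_mul_cot k l hb hsinα (hsin θ hθ)),
    integral_div, Omega, intervalIntegral.integral_of_le hα.2.le, integral_Ioc_eq_integral_Ioo]
end
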